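/- If φ, ψ : K → L are simplicial maps in the same contiguity class, then φ² and ψ² : K Π K → L Π L are in the same contiguity class. -/

import Mathlib

attribute [local instance] Classical.decEq

/-- An abstract simplicial complex on vertex set `V`. -/
structure SC (V : Type) where
  faces : Set (Finset V)
  down_closed : ∀ {σ τ : Finset V}, σ ∈ faces → τ ⊆ σ → τ.Nonempty → τ ∈ faces

/-- A vertex map inducing a simplicial map `K → L`. -/
def IsSimplicialMap {V W : Type} (K : SC V) (L : SC W) (f : V → W) : Prop :=
  ∀ σ ∈ K.faces, σ.image f ∈ L.faces

/-- Two maps are contiguous: for each simplex, the union of images is a simplex. -/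
def Contiguous {V W : Type} (K : SC V) (L : SC W) (f g : V → W) : Prop :=
  ∀ σ ∈ K.faces, σ.image f ∪ σ.image g ∈ L.faces

/-- Being in the same contiguity class: connected by a finite chain of contiguous maps. -/
def ContigClass {V W : Type} (K : SC V) (L : SC W) : (V → W) → (V → W) → Prop :=
  Relation.ReflTransGen (Contiguous K L)

/-- The categorical product of two simplicial complexes. -/
def prodSC {V W : Type} (K : SC V) (L : SC W) : SC (V × W) where
  faces := {σ | σ.image Prod.fst ∈ K.faces ∧ σ.image Prod.snd ∈ L.faces}
  down_closed := fun hσ hτσ hne =>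
    ⟨K.down_closed hσ.1 (Finset.image_subset_image hτσ) (hne.image _),
     L.down_closed hσ.2 (Finset.image_subset_image hτσ) (hne.image _)⟩

/-- `Ω` is a Farber subcomplex of `K Π K`: a subcomplex admitting a simplicial map
`s : Ω → K` with `Δ ∘ s` in the contiguity class of the inclusion. -/
def IsFarber {V : Type} (K : SC V) (Ω : SC (V × V)) : Prop :=
  Ω.faces ⊆ (prodSC K K).faces ∧
  ∃ s : V × V → V, IsSimplicialMap Ω K s ∧
    ContigClass Ω (prodSC K K) (fun p => (s p, s p)) id

/-- `K Π K` is covered by `n + 1` Farber subcomplexes. -/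
def TCle {V : Type} (K : SC V) (n : ℕ) : Prop :=
  ∃ Ω : Fin (n + 1) → SC (V × V), (∀ i, IsFarber K (Ω i)) ∧
    ∀ σ ∈ (prodSC K K).faces, ∃ i, σ ∈ (Ω i).faces

/-- Discrete topological complexity. -/
noncomputable def TCdisc {V : Type} (K : SC V) : ℕ∞ :=
  sInf {n : ℕ∞ | ∃ m : ℕ, n = (m : ℕ∞) ∧ TCle K m}

/-- A categorical subcomplex: the inclusion is in the contiguity class of a constant map
at a vertex of `K`. -/
def IsCategorical {V : Type} (K : SC V) (L : SC V) : Prop :=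
  L.faces ⊆ K.faces ∧ ∃ v : V, {v} ∈ K.faces ∧ ContigClass L K id (fun _ => v)

/-- `K` is covered by `n + 1` categorical subcomplexes. -/
def scatLe {V : Type} (K : SC V) (n : ℕ) : Prop :=
  ∃ L : Fin (n + 1) → SC V, (∀ i, IsCategorical K (L i)) ∧
    ∀ σ ∈ K.faces, ∃ i, σ ∈ (L i).faces

/-- Normalized simplicial LS-category. -/
noncomputable def scat {V : Type} (K : SC V) : ℕ∞ :=
  sInf {n : ℕ∞ | ∃ m : ℕ, n = (m : ℕ∞) ∧ scatLe K m}

/-- The preimage subcomplex of a subcomplex `Ω` under a vertex map `f`,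
inside an ambient complex `M`. -/
def preimSC {V W : Type} (M : SC W) (Ω : SC V) (f : W → V) : SC W where
  faces := {τ | τ ∈ M.faces ∧ τ.image f ∈ Ω.faces}
  down_closed := fun hσ hτσ hne =>
    ⟨M.down_closed hσ.1 hτσ hne,
     Ω.down_closed hσ.2 (Finset.image_subset_image hτσ) (hne.image _)⟩

/-- `K` and `L` have the same strong homotopy type. -/
def StrongEquiv {V W : Type} (K : SC V) (L : SC W) : Prop :=
  ∃ (φ : V → W) (ψ : W → V), IsSimplicialMap K L φ ∧ IsSimplicialMap L K ψ ∧
    ContigClass L L (φ ∘ ψ) id ∧ ContigClass K K (ψ ∘ φ) id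

/-- `K` is edge-path connected. -/
def EdgeConn {V : Type} (K : SC V) : Prop :=
  ∀ v w : V, {v} ∈ K.faces → {w} ∈ K.faces →
    Relation.ReflTransGen (fun a b => ({a, b} : Finset V) ∈ K.faces) v w

/-- `K` is strongly collapsible: the identity is in the contiguity class of a constant map. -/
def StronglyCollapsible {V : Type} (K : SC V) : Prop :=
  ∃ v : V, {v} ∈ K.faces ∧ ContigClass K K id (fun _ => v)

/-- Contiguity of both factors gives contiguity of the product map, because projecting
`(f × f')(σ) ∪ (g × g')(σ)` to a factor gives `f(π₁σ) ∪ g(π₁σ)`, resp. `f'(π₂σ) ∪ g'(π₂σ)`. -/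
theorem Contiguous.prodMap {V V' W W' : Type} {K : SC V} {K' : SC V'} {L : SC W} {L' : SC W'}
    {f g : V → W} {f' g' : V' → W'} (h : Contiguous K L f g) (h' : Contiguous K' L' f' g') :
    Contiguous (prodSC K K') (prodSC L L') (Prod.map f f') (Prod.map g g') := by
  intro σ ⟨hσ₁, hσ₂⟩
  constructor
  · simpa only [Finset.image_union, Finset.image_image, Prod.map_fst'] using h _ hσ₁
  · simpa only [Finset.image_union, Finset.image_image, Prod.map_snd'] using h' _ hσ₂

theorem contigClass_prod_map {V W : Type} (K : SC V) (L : SC W) (φ ψ : V → W)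
    (h : ContigClass K L φ ψ) :
    ContigClass (prodSC K K) (prodSC L L) (Prod.map φ φ) (Prod.map ψ ψ) :=
  h.lift (fun f => Prod.map f f) fun _ _ hfg => hfg.prodMap hfg
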